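/- Consider a k-means iteration in which a cluster C₂ with center c₂ = cm(C₂) gains a single point x and no other point changes clusters of C₂, where ‖x − c₂‖ ≥ ρ. Then the movement of the center satisfies ‖cm(C₂ ∪ {x}) − cm(C₂)‖ ≥ ρ/(|C₂| + 1), and consequently the resulting potential drop from recentering is at least ρ²/(|C₂| + 1). -/

import Mathlib

/-! Adding a point `x` to a cluster `S` of size `n` moves its centroid by `(x - cm S) / (n + 1)`,
since `(n + 1) • cm (S ∪ {x}) = n • cm S + x`. Both bounds follow by taking norms. -/

/-- Center of mass of a finite set of points in Euclidean space. -/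
noncomputable def cm {d : ℕ} (S : Finset (EuclideanSpace ℝ (Fin d))) :
    EuclideanSpace ℝ (Fin d) := (S.card : ℝ)⁻¹ • ∑ x ∈ S, x

section

variable {d : ℕ}

theorem card_smul_cm {S : Finset (EuclideanSpace ℝ (Fin d))} (hS : S.Nonempty) :
    (S.card : ℝ) • cm S = ∑ y ∈ S, y := by
  have hcard : (S.card : ℝ) ≠ 0 := by exact_mod_cast hS.card_pos.ne'
  rw [cm, smul_smul, mul_inv_cancel₀ hcard, one_smul]

theorem cm_union_singleton_sub_cm [DecidableEq (EuclideanSpace ℝ (Fin d))]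
    {S : Finset (EuclideanSpace ℝ (Fin d))} (hS : S.Nonempty)
    {x : EuclideanSpace ℝ (Fin d)} (hx : x ∉ S) :
    cm (S ∪ {x}) - cm S = ((S.card : ℝ) + 1)⁻¹ • (x - cm S) := by
  have hS₁ : (S ∪ {x}).Nonempty := hS.mono Finset.subset_union_left
  have hcard : ((S ∪ {x}).card : ℝ) = S.card + 1 := by
    rw [Finset.union_singleton, Finset.card_insert_of_notMem hx, Nat.cast_succ]
  have hpos : (0 : ℝ) < S.card + 1 := by positivity
  have hsum : ((S.card : ℝ) + 1) • cm (S ∪ {x}) = (S.card : ℝ) • cm S + x := by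
    rw [← hcard, card_smul_cm hS₁, card_smul_cm hS, Finset.union_singleton,
      Finset.sum_insert hx, add_comm]
  rw [eq_inv_smul_iff₀ hpos.ne', smul_sub, hsum, add_smul, one_smul]
  abel

theorem norm_cm_union_singleton_sub_cm [DecidableEq (EuclideanSpace ℝ (Fin d))]
    {S : Finset (EuclideanSpace ℝ (Fin d))} (hS : S.Nonempty)
    {x : EuclideanSpace ℝ (Fin d)} (hx : x ∉ S) :
    ‖cm (S ∪ {x}) - cm S‖ = ‖x - cm S‖ / (S.card + 1) := by
  rw [cm_union_singleton_sub_cm hS hx, norm_smul, norm_inv, Real.norm_of_nonneg (by positivity),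
    inv_mul_eq_div]

end

theorem stmt_19 (d : ℕ) [DecidableEq (EuclideanSpace ℝ (Fin d))]
    (C₂ : Finset (EuclideanSpace ℝ (Fin d))) (hC₂ : C₂.Nonempty)
    (x : EuclideanSpace ℝ (Fin d)) (hx : x ∉ C₂)
    (ρ : ℝ) (hρ : 0 ≤ ρ) (hfar : ρ ≤ ‖x - cm C₂‖) :
    ρ / (C₂.card + 1) ≤ ‖cm (C₂ ∪ {x}) - cm C₂‖ ∧
    ρ ^ 2 / (C₂.card + 1) ≤
      ((C₂.card : ℝ) + 1) * ‖cm (C₂ ∪ {x}) - cm C₂‖ ^ 2 := by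
  have hpos : (0 : ℝ) < C₂.card + 1 := by positivity
  rw [norm_cm_union_singleton_sub_cm hC₂ hx]
  constructor
  · exact div_le_div_of_nonneg_right hfar hpos.le
  · have hdrop : ((C₂.card : ℝ) + 1) * (‖x - cm C₂‖ / (C₂.card + 1)) ^ 2
        = ‖x - cm C₂‖ ^ 2 / (C₂.card + 1) := by
      field_simp
    rw [hdrop]
    gcongr
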